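/- arXiv:1712.09788 — 5 statements merged into one kernel-verified Lean document; each statement's English description precedes it below -/
import Mathlib

section
/- If V is a finite-dimensional complex vector space with a prevaluation v : V \ {0} -> Z^n, then the cardinality of the image v(V \ {0}) is at most dim V. -/
/-!
Vectors whose values are pairwise distinct are linearly independent: in a nontrivial linear
combination of them, the term of smallest value dominates, since `v x < v y` forces
`v (x + y) = v x`, so the combination is nonzero. Choosing one vector of each value thus gives
a linearly independent family indexed by the image of `v`.
-/

section

variable {K V Γ : Type*} [DivisionRing K] [AddCommGroup V] [Module K V] [LinearOrder Γ]

variable (K) in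
structure IsPrevaluation (v : V → Γ) : Prop where
  map_smul : ∀ f : V, f ≠ 0 → ∀ c : K, c ≠ 0 → v (c • f) = v f
  min_le_map_add : ∀ f g : V, f ≠ 0 → g ≠ 0 → f + g ≠ 0 → min (v f) (v g) ≤ v (f + g)

namespace IsPrevaluation

variable {v : V → Γ} (hv : IsPrevaluation K v)
include hv

theorem map_neg {f : V} (hf : f ≠ 0) : v (-f) = v f := by
  simpa using hv.map_smul f hf (-1) (neg_ne_zero.2 one_ne_zero)

theorem add_ne_zero_of_map_lt {x y : V} (hx : x ≠ 0) (hlt : v x < v y) : x + y ≠ 0 := by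
  intro hxy
  rw [eq_neg_of_add_eq_zero_right hxy, hv.map_neg hx] at hlt
  exact hlt.false

theorem map_add_of_map_lt {x y : V} (hx : x ≠ 0) (hy : y ≠ 0) (hlt : v x < v y) :
    v (x + y) = v x := by
  have hxy := hv.add_ne_zero_of_map_lt hx hlt
  have hge : v x ≤ v (x + y) := by
    simpa [min_eq_left hlt.le] using hv.min_le_map_add x y hx hy hxy
  -- `x = (x + y) + (-y)` and `v (-y) = v y > v x`, so the minimum must be `v (x + y)`.
  have hmin := hv.min_le_map_add (x + y) (-y) hxy (neg_ne_zero.2 hy) (by simpa using hx)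
  rw [add_neg_cancel_right, hv.map_neg hy, min_le_iff] at hmin
  exact le_antisymm (hmin.resolve_right hlt.not_ge) hge

theorem sum_smul_ne_zero_and_map_sum_mem {ι : Type*} {f : ι → V} (hf : ∀ i, f i ≠ 0)
    (hinj : Function.Injective (v ∘ f)) {c : ι → K} {s : Finset ι} (hs : s.Nonempty)
    (hc : ∀ i ∈ s, c i ≠ 0) :
    ∑ i ∈ s, c i • f i ≠ 0 ∧ v (∑ i ∈ s, c i • f i) ∈ (v ∘ f) '' s := by
  classical
  induction s using Finset.induction_on with
  | empty => exact absurd hs Finset.not_nonempty_empty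
  | @insert a s ha ih =>
    have hca := hc a (Finset.mem_insert_self a s)
    have hfa : c a • f a ≠ 0 := smul_ne_zero hca (hf a)
    have hva : v (c a • f a) = v (f a) := hv.map_smul (f a) (hf a) (c a) hca
    rw [Finset.sum_insert ha]
    rcases s.eq_empty_or_nonempty with rfl | hs
    · simpa [hva] using hfa
    obtain ⟨hsum, j, hj, hvj⟩ := ih hs fun i hi => hc i (Finset.mem_insert_of_mem hi)
    have hne : v (c a • f a) ≠ v (∑ i ∈ s, c i • f i) := by
      rw [hva, ← hvj]
      exact fun h => ha (hinj h ▸ hj)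
    rcases hne.lt_or_gt with hlt | hgt
    · refine ⟨hv.add_ne_zero_of_map_lt hfa hlt, a, by simp, ?_⟩
      rw [hv.map_add_of_map_lt hfa hsum hlt, hva, Function.comp_apply]
    · refine ⟨add_comm (c a • f a) _ ▸ hv.add_ne_zero_of_map_lt hsum hgt, j, by simp [hj], ?_⟩
      rw [add_comm, hv.map_add_of_map_lt hsum hfa hgt, hvj]

theorem linearIndependent {ι : Type*} {f : ι → V} (hf : ∀ i, f i ≠ 0)
    (hinj : Function.Injective (v ∘ f)) : LinearIndependent K f := by
  rw [linearIndependent_iff]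
  intro l hl
  by_contra hl0
  refine (hv.sum_smul_ne_zero_and_map_sum_mem hf hinj (Finset.nonempty_of_ne_empty
    (Finsupp.support_eq_empty.not.2 hl0)) fun i => (Finsupp.mem_support_iff.1 ·)).1 ?_
  simpa [Finsupp.linearCombination_apply, Finsupp.sum] using hl

theorem exists_linearIndependent_section :
    ∃ F : v '' {f : V | f ≠ 0} → V, LinearIndependent K F := by
  choose F hF0 hFv using fun a : v '' {f : V | f ≠ 0} => a.2
  refine ⟨F, hv.linearIndependent hF0 fun a b hab => Subtype.ext ?_⟩
  simpa only [Function.comp_apply, hFv] using hab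

end IsPrevaluation

end

/-- If `V` is a finite-dimensional complex vector space with a
(ℤⁿ-)prevaluation `v : V \ {0} → ℤⁿ` (lexicographic order), then the image
`v(V \ {0})` is finite of cardinality at most `dim V`. -/
theorem prevaluation_image_card_le_finrank {n : ℕ} {V : Type*} [AddCommGroup V]
    [Module ℂ V] [FiniteDimensional ℂ V]
    (v : V → Lex (Fin n → ℤ))
    (hscal : ∀ f : V, f ≠ 0 → ∀ c : ℂ, c ≠ 0 → v (c • f) = v f)
    (hmin : ∀ f g : V, f ≠ 0 → g ≠ 0 → f + g ≠ 0 →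
      v f ≤ v (f + g) ∨ v g ≤ v (f + g)) :
    (v '' {f : V | f ≠ 0}).Finite ∧
      (v '' {f : V | f ≠ 0}).ncard ≤ Module.finrank ℂ V := by
  have hv : IsPrevaluation ℂ v :=
    ⟨hscal, fun f g hf hg hfg => min_le_iff.2 (hmin f g hf hg hfg)⟩
  obtain ⟨F, hF⟩ := hv.exists_linearIndependent_section
  have := hF.finite
  cases nonempty_fintype (v '' {f : V | f ≠ 0})
  refine ⟨Set.finite_coe_iff.1 this, ?_⟩
  rw [← Nat.card_coe_set_eq, Nat.card_eq_fintype_card]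
  exact hF.fintype_card_le_finrank
end

section
/- Let v be a prevaluation on a finite-dimensional complex vector space V. Then dim V equals the sum over all \alpha in Z^n of the dimensions of the leaves \hat{V}_\alpha := V_{>= \alpha} / \bigcup_{\beta > \alpha} V_{>= \beta}. -/
/-!
The values of `v` on nonzero vectors form a finite set `t₁ < ⋯ < tₘ`, since the dimensions of the
`V_{≥tᵢ}` strictly decrease. Moreover `V_{≥t₁} = V`, and the union of the `V_{≥β}` over `β > tᵢ` is
`V_{≥tᵢ₊₁}` (or `0` when `i = m`), so the leaf dimensions `dim V_{≥tᵢ} - dim V_{≥tᵢ₊₁}` telescope to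
`dim V`, while the leaves above non-values are zero.
-/

section

open Set Module

variable {K V ι : Type*} [DivisionRing K] [AddCommGroup V] [Module K V] [LinearOrder ι]

theorem Submodule.finrank_quotient_comap_subtype_add_finrank {M N : Submodule K V}
    [FiniteDimensional K M] (h : N ≤ M) :
    finrank K (M ⧸ N.comap M.subtype) + finrank K N = finrank K M := by
  rw [← (Submodule.comapSubtypeEquivOfLe h).finrank_eq]
  exact Submodule.finrank_quotient_add_finrank _

def IsSuperlevelFiltration (v : V → ι) (W : ι → Submodule K V) : Prop :=
  ∀ α f, f ∈ W α ↔ f = 0 ∨ α ≤ v f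

noncomputable def leafDim (W : ι → Submodule K V) (α : ι) : ℕ :=
  finrank K (W α ⧸ (⨆ β > α, W β).comap (W α).subtype)

namespace IsSuperlevelFiltration

variable {v : V → ι} {W : ι → Submodule K V}

theorem mem_apply (hW : IsSuperlevelFiltration v W) (f : V) : f ∈ W (v f) :=
  (hW _ f).2 (Or.inr le_rfl)

theorem le_apply_of_mem (hW : IsSuperlevelFiltration v W) {α : ι} {f : V} (hf : f ∈ W α)
    (hf0 : f ≠ 0) : α ≤ v f :=
  ((hW α f).1 hf).resolve_left hf0

theorem antitone (hW : IsSuperlevelFiltration v W) : Antitone W := fun _ _ hαβ f hf =>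
  (hW _ f).2 (((hW _ f).1 hf).imp_right hαβ.trans)

theorem iSup_gt_le (hW : IsSuperlevelFiltration v W) (α : ι) : ⨆ β > α, W β ≤ W α :=
  iSup₂_le fun _ hβ => hW.antitone hβ.le

theorem iSup_gt_eq_of_notMem (hW : IsSuperlevelFiltration v W) {α : ι} (hα : α ∉ v '' {0}ᶜ) :
    ⨆ β > α, W β = W α := by
  refine (hW.iSup_gt_le α).antisymm fun f hf => ?_
  by_cases hf0 : f = 0
  · exact hf0 ▸ Submodule.zero_mem _
  have hlt : α < v f := (hW.le_apply_of_mem hf hf0).lt_of_ne fun h => hα ⟨f, hf0, h.symm⟩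
  exact Submodule.mem_iSup_of_mem (v f) <| Submodule.mem_iSup_of_mem hlt (hW.mem_apply f)

theorem iSup_gt_eq_bot (hW : IsSuperlevelFiltration v W) {α : ι} (hα : v '' {0}ᶜ ∩ Ioi α = ∅) :
    ⨆ β > α, W β = ⊥ := by
  refine eq_bot_iff.2 <| iSup₂_le fun β hβ f hf => ?_
  by_contra hf0
  exact hα.subset ⟨⟨f, hf0, rfl⟩, hβ.trans_le (hW.le_apply_of_mem hf hf0)⟩

theorem iSup_gt_eq_of_isLeast (hW : IsSuperlevelFiltration v W) {α a : ι}
    (ha : IsLeast (v '' {0}ᶜ ∩ Ioi α) a) :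
    ⨆ β > α, W β = W a := by
  refine le_antisymm (iSup₂_le fun β hβ f hf => ?_) (le_iSup₂_of_le a ha.1.2 le_rfl)
  by_cases hf0 : f = 0
  · exact hf0 ▸ Submodule.zero_mem _
  exact (hW a f).2 (Or.inr (ha.2 ⟨⟨f, hf0, rfl⟩, hβ.trans_le (hW.le_apply_of_mem hf hf0)⟩))

variable [FiniteDimensional K V]

theorem finite_values (hW : IsSuperlevelFiltration v W) : (v '' {0}ᶜ).Finite := by
  refine Set.Finite.of_finite_image (f := fun α => finrank K (W α)) ?_ ?_
  · exact (Set.finite_Iic (finrank K V)).subset <| by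
      rintro _ ⟨α, -, rfl⟩; exact Submodule.finrank_le _
  · refine StrictAntiOn.injOn fun α hα β _ hαβ => Submodule.finrank_lt_finrank_of_lt ?_
    obtain ⟨f, hf0, rfl⟩ := hα
    exact lt_of_le_of_ne (hW.antitone hαβ.le) fun h =>
      (hαβ.trans_le (hW.le_apply_of_mem (h ▸ hW.mem_apply f) hf0)).false

theorem finrank_eq_leafDim_add (hW : IsSuperlevelFiltration v W) (α : ι) :
    finrank K (W α) = leafDim W α + finrank K (⨆ β > α, W β : Submodule K V) :=
  (Submodule.finrank_quotient_comap_subtype_add_finrank (hW.iSup_gt_le α)).symm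

theorem leafDim_eq_zero_of_notMem (hW : IsSuperlevelFiltration v W) {α : ι}
    (hα : α ∉ v '' {0}ᶜ) : leafDim W α = 0 := by
  have := hW.finrank_eq_leafDim_add α
  rw [hW.iSup_gt_eq_of_notMem hα] at this
  omega

theorem finrank_iSup_gt_eq_sum (hW : IsSuperlevelFiltration v W) (s : Finset ι) {α : ι}
    (hs : ↑s = v '' {0}ᶜ ∩ Ioi α) :
    finrank K (⨆ β > α, W β : Submodule K V) = ∑ β ∈ s, leafDim W β := by
  induction s using Finset.induction_on_min generalizing α with
  | empty => rw [hW.iSup_gt_eq_bot (by simpa using hs.symm), finrank_bot, Finset.sum_empty]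
  | insert a s hmin ih =>
    have hmem (x : ι) : x ∈ insert a s ↔ x ∈ v '' {0}ᶜ ∩ Ioi α := by
      rw [← Finset.mem_coe, hs]
    have haα := (hmem a).1 (Finset.mem_insert_self a s)
    have hleast : IsLeast (v '' {0}ᶜ ∩ Ioi α) a := by
      refine ⟨haα, fun x hx => ?_⟩
      rcases Finset.mem_insert.1 ((hmem x).2 hx) with rfl | hx
      exacts [le_rfl, (hmin x hx).le]
    have hs' : ↑s = v '' {0}ᶜ ∩ Ioi a := by
      ext x
      constructor
      · intro hx
        exact ⟨((hmem x).1 (Finset.mem_insert_of_mem hx)).1, hmin x hx⟩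
      · rintro ⟨hxT, hax⟩
        exact (Finset.mem_insert.1 ((hmem x).2 ⟨hxT, haα.2.trans hax⟩)).resolve_left hax.ne'
    have has : a ∉ s := fun h => (hmin a h).false
    rw [hW.iSup_gt_eq_of_isLeast hleast, hW.finrank_eq_leafDim_add, ih hs',
      Finset.sum_insert has]

theorem finrank_eq_finsum_leafDim (hW : IsSuperlevelFiltration v W) :
    finrank K V = ∑ᶠ α, leafDim W α := by
  classical
  set T := hW.finite_values.toFinset
  have hsupp : Function.support (leafDim W) ⊆ T := fun α hα => by
    by_contra hαT
    exact hα (hW.leafDim_eq_zero_of_notMem (by simpa [T] using hαT))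
  rw [finsum_eq_finsetSum_of_support_subset _ hsupp]
  have hval (f : V) (hf0 : f ≠ 0) : v f ∈ T := hW.finite_values.mem_toFinset.2 ⟨f, hf0, rfl⟩
  rcases T.eq_empty_or_nonempty with hT | hT
  · have : Subsingleton V := (subsingleton_iff_forall_eq 0).2 fun f => by
      by_contra hf0
      simpa [hT] using hval f hf0
    rw [hT, Finset.sum_empty, finrank_zero_of_subsingleton]
  · set a := T.min' hT
    have htop : W a = ⊤ := eq_top_iff.2 fun f _ => by
      by_cases hf0 : f = 0
      · exact hf0 ▸ Submodule.zero_mem _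
      exact (hW a f).2 (Or.inr (T.min'_le _ (hval f hf0)))
    have herase : ↑(T.erase a) = v '' {0}ᶜ ∩ Ioi a := by
      ext x
      rw [Finset.mem_coe, Finset.mem_erase, mem_inter_iff, ← hW.finite_values.mem_toFinset]
      exact ⟨fun ⟨hxa, hx⟩ => ⟨hx, (T.min'_le x hx).lt_of_ne' hxa⟩, fun ⟨hx, hax⟩ => ⟨hax.ne', hx⟩⟩
    rw [← finrank_top K V, ← htop, hW.finrank_eq_leafDim_add, hW.finrank_iSup_gt_eq_sum _ herase,
      Finset.add_sum_erase _ _ (T.min'_mem hT)]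

end IsSuperlevelFiltration

end

theorem prevaluation_finrank_eq_sum_leaf_dims_general {n : ℕ} {V : Type*} [AddCommGroup V]
    [Module ℂ V] [FiniteDimensional ℂ V]
    (v : V → Lex (Fin n → ℤ))
    (W : Lex (Fin n → ℤ) → Submodule ℂ V)
    (hW : ∀ α (f : V), f ∈ W α ↔ f = 0 ∨ α ≤ v f) :
    Module.finrank ℂ V =
      ∑ᶠ α : Lex (Fin n → ℤ),
        Module.finrank ℂ
          ((W α) ⧸ (Submodule.comap (W α).subtype (⨆ β > α, W β))) :=
  IsSuperlevelFiltration.finrank_eq_finsum_leafDim hW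

/-- Let `v` be a prevaluation on a finite-dimensional complex vector
space `V` with values in `ℤⁿ` (lexicographic order).  For `α ∈ ℤⁿ` let `W α` be the
subspace `V_{≥α} = {f : f = 0 ∨ v f ≥ α}`; the leaf above `α` is the quotient of
`W α` by `⋃_{β > α} V_{≥β}` (which, as a supremum of the antitone family, is the
submodule `⨆ β > α, W β` viewed inside `W α`).  Then `dim V` is the sum over all
`α ∈ ℤⁿ` of the dimensions of the leaves. -/
theorem prevaluation_finrank_eq_sum_leaf_dims {n : ℕ} {V : Type*} [AddCommGroup V]
    [Module ℂ V] [FiniteDimensional ℂ V]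
    (v : V → Lex (Fin n → ℤ))
    (hscal : ∀ f : V, f ≠ 0 → ∀ c : ℂ, c ≠ 0 → v (c • f) = v f)
    (hmin : ∀ f g : V, f ≠ 0 → g ≠ 0 → f + g ≠ 0 →
      v f ≤ v (f + g) ∨ v g ≤ v (f + g))
    (W : Lex (Fin n → ℤ) → Submodule ℂ V)
    (hW : ∀ α (f : V), f ∈ W α ↔ f = 0 ∨ α ≤ v f) :
    Module.finrank ℂ V =
      ∑ᶠ α : Lex (Fin n → ℤ),
        Module.finrank ℂ
          ((W α) ⧸ (Submodule.comap (W α).subtype (⨆ β > α, W β))) :=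
  prevaluation_finrank_eq_sum_leaf_dims_general v W hW
end

section
/- Let v be a Z^n-valuation on a Z_{>= 0}-graded C-algebra R with valuation extension \hat{v}(f) = (deg f, v(f_{deg f})) and associated filtration R_{<= (d,x)} := {f : \hat{v}(f) <= (d,x)} indexed by the image semigroup \Gamma. If v has one-dimensional leaves on each graded piece, then the associated graded algebra gr R := \bigoplus_{(d,x) in \Gamma} R_{<= (d,x)} / R_{< (d,x)} is isomorphic as a \Gamma-graded C-algebra to the semigroup algebra C[\Gamma]. -/
/-!
A product of nonzero homogeneous elements is nonzero and `Γ` has unique sums, so `A` is a domain.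
In its fraction field, the quotients `s / t` of homogeneous elements, paired with the degree
`deg s - deg t`, form a group `H`, and since the leaves are lines, a fraction paired with a degree
`γ ∈ Γ` lies in the leaf `ℬ γ`. The degrees span a free abelian group, so the degree map of `H`
has a homomorphic section over it; evaluated on `Γ` it picks nonzero `e γ ∈ ℬ γ` with
`e γ * e δ = e (γ + δ)` and `e 0 = 1`, and `x^γ ↦ e γ` is the required isomorphism `ℂ[Γ] ≃ A`.
-/

open DirectSum

theorem GradedRing.noZeroDivisors_of_uniqueSums {ι R A : Type*} [AddMonoid ι] [DecidableEq ι]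
    [UniqueSums ι] [CommSemiring R] [Semiring A] [Algebra R A]
    (ℬ : ι → Submodule R A) [GradedRing ℬ]
    (hmul_ne : ∀ {i j : ι} {a b : A}, a ∈ ℬ i → b ∈ ℬ j → a ≠ 0 → b ≠ 0 → a * b ≠ 0) :
    NoZeroDivisors A := by
  classical
  refine ⟨fun {x y} hxy => ?_⟩
  by_contra! h
  have hsupp : ∀ z : A, z ≠ 0 → (decompose ℬ z).support.Nonempty := fun z hz => by
    rw [Finset.nonempty_iff_ne_empty, ne_eq, DFinsupp.support_eq_empty, ← decompose_zero]
    exact (decompose ℬ).injective.ne hz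
  obtain ⟨i, hi, j, hj, huniq⟩ := UniqueSums.uniqueAdd_of_nonempty (hsupp x h.1) (hsupp y h.2)
  have hlead : (decompose ℬ (x * y) (i + j) : A) = decompose ℬ x i * decompose ℬ y j := by
    rw [decompose_mul, coe_mul_apply, Finset.sum_eq_single_of_mem (i, j) (by simp [hi, hj])]
    rintro ⟨i', j'⟩ hij hne
    simp only [Finset.mem_filter, Finset.mem_product] at hij
    exact absurd (Prod.ext_iff.mpr (huniq hij.1.1 hij.1.2 hij.2)) hne
  refine hmul_ne (decompose ℬ x i).2 (decompose ℬ y j).2 ?_ ?_ (by simpa [hxy] using hlead.symm)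
  · simpa using hi
  · simpa using hj

theorem AddMonoidHom.exists_section_of_le_range {M N : Type*} [AddCommGroup M] [AddCommGroup N]
    (f : M →+ N) (P : Submodule ℤ N) [Module.Projective ℤ P]
    (hP : P ≤ AddSubgroup.toIntSubmodule f.range) :
    ∃ s : P →+ M, ∀ p, f (s p) = p := by
  obtain ⟨s, hs⟩ := Module.projective_lifting_property f.toIntLinearMap.rangeRestrict
    (Submodule.inclusion (p' := LinearMap.range f.toIntLinearMap) fun _ hp => hP hp)
    (LinearMap.surjective_rangeRestrict _)
  exact ⟨s.toAddMonoidHom, fun p => congrArg Subtype.val (LinearMap.congr_fun hs p)⟩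

theorem DirectSum.IsInternal.exists_algEquiv_addMonoidAlgebra {k ι A : Type*} [Field k]
    [AddMonoid ι] [DecidableEq ι] [Ring A] [Algebra k A] {ℬ : ι → Submodule k A} (h : IsInternal ℬ)
    (F : Multiplicative ι →* A) (hF : ∀ i, ℬ i = k ∙ F (.ofAdd i))
    (hF0 : ∀ i, F (.ofAdd i) ≠ 0) :
    ∃ e : A ≃ₐ[k] AddMonoidAlgebra k ι, ∀ i,
      (ℬ i).map e.toLinearMap = k ∙ AddMonoidAlgebra.single i 1 := by
  have hli : LinearIndependent k fun i => F (.ofAdd i) :=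
    h.submodule_iSupIndep.linearIndependent ℬ
      (fun i => by rw [hF i]; exact Submodule.mem_span_singleton_self _) hF0
  have hspan : ⊤ ≤ Submodule.span k (Set.range fun i => F (.ofAdd i)) := by
    rw [← h.submodule_iSup_eq_top, Submodule.span_range_eq_iSup]
    exact (iSup_congr hF).le
  let bA := Module.Basis.mk hli hspan
  have hlift : (AddMonoidAlgebra.lift k A ι F).toLinearMap =
      ((AddMonoidAlgebra.basis ι k).equiv bA (Equiv.refl ι)).toLinearMap :=
    (AddMonoidAlgebra.basis ι k).ext fun i => by
      rw [LinearEquiv.coe_coe, Module.Basis.equiv_apply]; simp [bA]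
  have hbij : Function.Bijective (AddMonoidAlgebra.lift k A ι F) := by
    have := ((AddMonoidAlgebra.basis ι k).equiv bA (Equiv.refl ι)).bijective
    rwa [← LinearEquiv.coe_toLinearMap, ← hlift] at this
  let e := AlgEquiv.ofBijective _ hbij
  refine ⟨e.symm, fun i => ?_⟩
  rw [hF, Submodule.map_span, Set.image_singleton]
  congr 2
  exact e.symm_apply_eq.mpr (by simp [e])

section HomogeneousFractions

variable {k A Γ G : Type*} [Field k] [CommRing A] [IsDomain A] [Algebra k A]
  [AddCommMonoid Γ] [AddCommGroup G] (ℬ : Γ → Submodule k A) [SetLike.GradedMonoid ℬ]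
  (ι : Γ →+ G)

/-- Pairing a fraction with its degree avoids proving that this degree is well defined. -/
def homogeneousFractions : Subgroup ((FractionRing A)ˣ × Multiplicative G) where
  carrier := {x | ∃ (γ δ : Γ) (s t : A), s ∈ ℬ γ ∧ t ∈ ℬ δ ∧ t ≠ 0 ∧
    (x.1 : FractionRing A) * algebraMap A _ t = algebraMap A _ s ∧ x.2.toAdd = ι γ - ι δ}
  one_mem' := ⟨0, 0, 1, 1, SetLike.GradedOne.one_mem, SetLike.GradedOne.one_mem, one_ne_zero,
    by simp, by simp⟩
  mul_mem' := by
    rintro x y ⟨γ, δ, s, t, hs, ht, ht0, hx, hxd⟩ ⟨γ', δ', s', t', hs', ht', ht0', hy, hyd⟩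
    refine ⟨γ + γ', δ + δ', s * s', t * t', SetLike.mul_mem_graded hs hs',
      SetLike.mul_mem_graded ht ht', mul_ne_zero ht0 ht0', ?_, ?_⟩
    · simp only [Prod.fst_mul, Units.val_mul, map_mul, ← hx, ← hy]
      ring
    · simp only [Prod.snd_mul, toAdd_mul, hxd, hyd, map_add]
      abel
  inv_mem' := by
    rintro x ⟨γ, δ, s, t, hs, ht, ht0, hx, hxd⟩
    have hs0 : s ≠ 0 := by
      rintro rfl
      rw [map_zero, mul_eq_zero, map_eq_zero_iff _ (IsFractionRing.injective A _)] at hx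
      exact hx.elim x.1.ne_zero ht0
    refine ⟨δ, γ, t, s, ht, hs, hs0, ?_, by simp [hxd]⟩
    rw [Prod.fst_inv, ← hx, ← mul_assoc, Units.inv_mul, one_mul]

variable {ℬ ι}

theorem mem_homogeneousFractions_of_mem {γ : Γ} {a : A} (ha : a ∈ ℬ γ) {x : (FractionRing A)ˣ}
    (hx : (x : FractionRing A) = algebraMap A _ a) :
    (x, .ofAdd (ι γ)) ∈ homogeneousFractions ℬ ι :=
  ⟨γ, 0, a, 1, ha, SetLike.GradedOne.one_mem, one_ne_zero, by simp [hx], by simp⟩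

theorem exists_mem_of_mem_homogeneousFractions (hι : Function.Injective ι)
    (hleaf : ∀ γ, Module.finrank k (ℬ γ) = 1) {γ : Γ} {x : (FractionRing A)ˣ}
    (hx : (x, .ofAdd (ι γ)) ∈ homogeneousFractions ℬ ι) :
    ∃ a ∈ ℬ γ, algebraMap A (FractionRing A) a = x := by
  obtain ⟨α, β, s, t, hs, ht, ht0, hxst, hdeg⟩ := hx
  have hα : α = γ + β := hι (by simpa [eq_sub_iff_add_eq, eq_comm] using hdeg)
  obtain ⟨⟨a, ha⟩, hne, -⟩ := finrank_eq_one_iff'.mp (hleaf γ)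
  have ha0 : a ≠ 0 := fun h => hne (Subtype.ext h)
  have hat : a * t ∈ ℬ α := hα ▸ SetLike.mul_mem_graded ha ht
  obtain ⟨c, rfl⟩ := Submodule.mem_span_singleton.mp <|
    eq_span_singleton_of_mem_of_finrank_eq_one (hleaf α) hat (mul_ne_zero ha0 ht0) ▸ hs
  refine ⟨c • a, Submodule.smul_mem _ c ha, mul_right_cancel₀ ?_ (hxst.trans ?_).symm⟩
  · exact (map_ne_zero_iff _ (IsFractionRing.injective A _)).mpr ht0
  · rw [← smul_mul_assoc, map_mul]

theorem exists_monoidHom_mem_graded_ne_zero (hι : Function.Injective ι)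
    [Module.Free ℤ (Submodule.span ℤ (Set.range ι))] (hleaf : ∀ γ, Module.finrank k (ℬ γ) = 1) :
    ∃ F : Multiplicative Γ →* A, ∀ γ, F (.ofAdd γ) ∈ ℬ γ ∧ F (.ofAdd γ) ≠ 0 := by
  set P := Submodule.span ℤ (Set.range ι)
  set H := homogeneousFractions ℬ ι
  have hinj := IsFractionRing.injective A (FractionRing A)
  let deg : Additive H →+ G := MonoidHom.toAdditiveLeft ((MonoidHom.snd _ _).comp H.subtype)
  have hP : P ≤ AddSubgroup.toIntSubmodule deg.range := by
    refine Submodule.span_le.mpr ?_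
    rintro _ ⟨γ, rfl⟩
    obtain ⟨⟨a, ha⟩, hne, -⟩ := finrank_eq_one_iff'.mp (hleaf γ)
    have ha0 : algebraMap A (FractionRing A) a ≠ 0 :=
      (map_ne_zero_iff _ hinj).mpr fun h => hne (Subtype.ext h)
    exact ⟨.ofMul ⟨(Units.mk0 _ ha0, .ofAdd (ι γ)), mem_homogeneousFractions_of_mem ha rfl⟩, rfl⟩
  obtain ⟨s, hs⟩ := deg.exists_section_of_le_range P hP
  let ιP : Γ →+ P := ι.codRestrict P fun γ => Submodule.subset_span ⟨γ, rfl⟩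
  let u : Multiplicative Γ →* (FractionRing A)ˣ := (MonoidHom.fst _ _).comp <| H.subtype.comp <|
    AddMonoidHom.toMultiplicativeLeft (s.comp ιP)
  have hu : ∀ γ, (u (.ofAdd γ), .ofAdd (ι γ)) ∈ H := fun γ => by
    have : (u (.ofAdd γ), Multiplicative.ofAdd (ι γ)) = ((s (ιP γ)).toMul : H) :=
      Prod.ext rfl (congrArg Multiplicative.ofAdd (hs (ιP γ))).symm
    exact this ▸ SetLike.coe_mem _
  choose a ha hau using fun γ => exists_mem_of_mem_homogeneousFractions hι hleaf (hu γ)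
  refine ⟨{ toFun := fun g => a g.toAdd, map_one' := hinj ?_, map_mul' := fun g h => hinj ?_ },
    fun γ => ⟨ha γ, fun h => (u (.ofAdd γ)).ne_zero <| by
      rw [← hau]; exact (map_eq_zero_iff _ hinj).mpr h⟩⟩
  · simp [hau]
  · simp [hau]

end HomogeneousFractions

/-- If the valuation has one-dimensional leaves, the associated graded
algebra `gr R` is isomorphic, as a `Γ`-graded `ℂ`-algebra, to the semigroup algebra
`ℂ[Γ]`, where `Γ ⊆ ℤ_{≥0} × ℤⁿ` is the image value semigroup.

Formalization: `A` plays the role of the associated graded algebra `gr R`: it is a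
commutative `ℂ`-algebra with a direct sum decomposition `ℬ` indexed by the value
semigroup `Γ` whose components are the leaves.  The hypotheses record exactly the
structure `gr R` carries: `1 ∈ ℬ 0`, the product of the `γ`- and `γ'`-components
lands in the `(γ+γ')`-component and is nonzero on nonzero elements (the defining
property of the multiplication induced by a *valuation* on the associated graded),
and — the hypothesis of the statement — each leaf `ℬ γ` is one-dimensional.  The
conclusion is a `ℂ`-algebra isomorphism `gr R ≅ ℂ[Γ]` matching the `γ`-component
with the line spanned by the basis element `x^γ` of the semigroup algebra, i.e. an
isomorphism of `Γ`-graded algebras. -/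
theorem gradedAlgebra_iso_semigroupAlgebra_of_one_dim_leaves {n : ℕ}
    (Γ : AddSubmonoid (ℕ × (Fin n → ℤ)))
    (A : Type*) [CommRing A] [Algebra ℂ A]
    (ℬ : Γ → Submodule ℂ A) [DirectSum.Decomposition ℬ]
    (hone_mem : (1 : A) ∈ ℬ 0)
    (hmul : ∀ (γ γ' : Γ), ∀ a ∈ ℬ γ, ∀ b ∈ ℬ γ', a * b ∈ ℬ (γ + γ'))
    (hmul_ne : ∀ (γ γ' : Γ), ∀ a ∈ ℬ γ, ∀ b ∈ ℬ γ', a ≠ 0 → b ≠ 0 → a * b ≠ 0)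
    (hleaf : ∀ γ : Γ, Module.finrank ℂ (ℬ γ) = 1) :
    ∃ e : A ≃ₐ[ℂ] AddMonoidAlgebra ℂ Γ, ∀ γ : Γ,
      Submodule.map (e.toLinearMap) (ℬ γ) =
        Submodule.span ℂ {AddMonoidAlgebra.single γ (1 : ℂ)} := by
  let : GradedRing ℬ :=
    { one_mem := hone_mem, mul_mem := fun γ γ' _ _ ha hb => hmul γ γ' _ ha _ hb }
  have : UniqueSums Γ := UniqueSums.of_injective_addHom Γ.subtype.toAddHom
    Subtype.val_injective inferInstance
  have : NoZeroDivisors A := GradedRing.noZeroDivisors_of_uniqueSums ℬ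
    fun ha hb => hmul_ne _ _ _ ha _ hb
  have : Nontrivial A := by
    obtain ⟨⟨a, _⟩, ha0, -⟩ := finrank_eq_one_iff'.mp (hleaf 0)
    exact nontrivial_of_ne a 0 fun h => ha0 (Subtype.ext h)
  have : IsDomain A := NoZeroDivisors.to_isDomain A
  let ι : Γ →+ ℤ × (Fin n → ℤ) :=
    ((Nat.castAddMonoidHom ℤ).prodMap (AddMonoidHom.id _)).comp Γ.subtype
  have hι : Function.Injective ι := fun γ δ h => by
    rw [Subtype.ext_iff, Prod.ext_iff]; simpa [ι] using Prod.ext_iff.mp h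
  obtain ⟨F, hF⟩ := exists_monoidHom_mem_graded_ne_zero (ℬ := ℬ) hι hleaf
  exact (DirectSum.Decomposition.isInternal ℬ).exists_algEquiv_addMonoidAlgebra F
    (fun γ => eq_span_singleton_of_mem_of_finrank_eq_one (hleaf γ) (hF γ).1 (hF γ).2)
    fun γ => (hF γ).2
end

section
/- Given a dominant weight \lambda (i.e., \lambda in Z_{>=0}-span of fundamental weights) and a word i = (i_1,...,i_n), there exists m = (m_1,...,m_n) in Z_{>0}^n with m_j >= m(\lambda)_j for all j, such that for every \sigma in {+,-}^n and every index j with \sigma_j = -, the Cartier datum satisfies r_{\sigma,j} = A_j(r_{\sigma,j+1},...,r_{\sigma,n}) > 0 (in particular all r_{\sigma,j} >= 0). -/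
/-- The function `A_j(x_{j+1},...,x_n)` of the paper:
`A_j = ⟨∑_{l ≥ j} m_l ϖ_{β_l} - ∑_{l > j} x_l β_l, β_j^∨⟩
     = ∑_{j ≤ l ≤ n, β_l = β_j} m_l - ∑_{j < l ≤ n} ⟨β_l, β_j^∨⟩ x_l`,
for a word `w` (so `β_l = α_{w l}`), a multiplicity list `m`, and the Cartan
pairing matrix `C i j = ⟨α_i, α_j^∨⟩`; indices run over `1, ..., n`. -/
noncomputable def Afun (C : ℕ → ℕ → ℤ) (w : ℕ → ℕ) (m : ℕ → ℤ) (n j : ℕ)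
    (x : ℕ → ℝ) : ℝ :=
  (∑ l ∈ Finset.Icc j n, if w l = w j then (m l : ℝ) else 0)
    - ∑ l ∈ Finset.Ioc j n, (C (w l) (w j) : ℝ) * x l

/-- Condition (P): for every `1 ≤ k ≤ n`, every point `(x_{k+1},...,x_n)` with
`0 ≤ x_l ≤ A_l(x_{l+1},...,x_n)` for all `l > k` satisfies `A_k ≥ 0`.
(For `k = n` this is the condition `m_n ≥ 0`.) -/
def CondP (C : ℕ → ℕ → ℤ) (w : ℕ → ℕ) (m : ℕ → ℤ) (n : ℕ) : Prop :=
  ∀ k ∈ Finset.Icc 1 n, ∀ x : ℕ → ℝ,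
    (∀ l, k < l → l ≤ n → 0 ≤ x l ∧ x l ≤ Afun C w m n l x) →
      0 ≤ Afun C w m n k x

/-!
Let `D ≥ 0` bound `-⟨β_l, β_j^∨⟩` and put `S_j = ∑_{l ≥ j} m_l`. Since `A_j ≤ S_j + D ∑_{l > j} x_l`
for `x ≥ 0`, backward induction on `j` gives `0 ≤ r_{σ,j} ≤ (D+1)^{n-j} S_j`, the geometric identity
`1 + D ∑_{t < k} (D+1)^t = (D+1)^k` closing the step. Since the pairing is `2` on the diagonal and
`≤ 0` off it, `A_j ≥ m_j - 2 ∑_{l > j} x_l`, so positivity of `r_{σ,j}` needs `m_j` to dominate twice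
the bounds of the later `r_{σ,l}`; this holds for the geometric choice `m_j = L (c+1)^{n-j}` with
`c = 2n(D+1)^n` and `L > ∑ m(λ)_l`, because then `m_j = L + c ∑_{l > j} m_l` exactly.
-/

open Finset

lemma sum_Ioc_comp_sub_eq_sum_range {M : Type*} [AddCommMonoid M] (f : ℕ → M) (j n : ℕ) :
    ∑ l ∈ Ioc j n, f (n - l) = ∑ t ∈ range (n - j), f t := by
  apply sum_nbij' (fun l => n - l) (fun t => n - t) <;> intro a ha <;>
    simp only [mem_Ioc, mem_range] at ha ⊢ <;> omega

lemma one_add_mul_sum_Ioc_pow {R : Type*} [CommRing R] (a : R) (j n : ℕ) :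
    1 + a * ∑ l ∈ Ioc j n, (a + 1) ^ (n - l) = (a + 1) ^ (n - j) := by
  rw [sum_Ioc_comp_sub_eq_sum_range (fun t => (a + 1) ^ t)]
  linear_combination mul_geom_sum (a + 1) (n - j)

section CartierData

variable (C : ℕ → ℕ → ℤ) (w : ℕ → ℕ) (m : ℕ → ℤ) (n : ℕ)

def afunInt (j : ℕ) (x : ℕ → ℤ) : ℤ :=
  (∑ l ∈ Icc j n, if w l = w j then m l else 0) - ∑ l ∈ Ioc j n, C (w l) (w j) * x l

lemma cast_afunInt (j : ℕ) (x : ℕ → ℤ) :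
    (afunInt C w m n j x : ℝ) = Afun C w m n j (fun l => x l) := by
  simp only [afunInt, Afun]
  push_cast [apply_ite (Int.cast : ℤ → ℝ)]
  rfl

variable {C w m n}

lemma afunInt_congr {j : ℕ} {x y : ℕ → ℤ} (h : ∀ l ∈ Ioc j n, x l = y l) :
    afunInt C w m n j x = afunInt C w m n j y := by
  simp only [afunInt, sum_congr rfl fun l hl => congrArg (C (w l) (w j) * ·) (h l hl)]

lemma le_afunInt (hC2 : ∀ i, C i i = 2) (hCoff : ∀ i j, i ≠ j → C i j ≤ 0)
    (hm : ∀ l, 0 ≤ m l) {j : ℕ} (hj : j ≤ n) {x : ℕ → ℤ} (hx : ∀ l ∈ Ioc j n, 0 ≤ x l) :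
    m j - 2 * ∑ l ∈ Ioc j n, x l ≤ afunInt C w m n j x := by
  have h_diag : m j ≤ ∑ l ∈ Icc j n, if w l = w j then m l else 0 := by
    simpa using single_le_sum (f := fun l => if w l = w j then m l else 0)
      (fun l _ => by split_ifs <;> simp [hm l]) (mem_Icc.mpr ⟨le_rfl, hj⟩)
  have h_coeff : ∀ l ∈ Ioc j n, C (w l) (w j) * x l ≤ 2 * x l := by
    intro l hl
    by_cases hw : w l = w j
    · rw [hw, hC2]
    · nlinarith [hCoff _ _ hw, hx l hl]
  rw [afunInt, mul_sum]
  exact sub_le_sub h_diag (sum_le_sum h_coeff)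

lemma afunInt_le (hm : ∀ l, 0 ≤ m l) {j : ℕ} {D : ℤ} (hD : ∀ l ∈ Ioc j n, -D ≤ C (w l) (w j))
    {x : ℕ → ℤ} (hx : ∀ l ∈ Ioc j n, 0 ≤ x l) :
    afunInt C w m n j x ≤ ∑ l ∈ Icc j n, m l + D * ∑ l ∈ Ioc j n, x l := by
  have h_diag : (∑ l ∈ Icc j n, if w l = w j then m l else 0) ≤ ∑ l ∈ Icc j n, m l :=
    sum_le_sum fun l _ => by split_ifs <;> simp [hm l]
  have h_coeff : ∀ l ∈ Ioc j n, -(D * x l) ≤ C (w l) (w j) * x l := fun l hl => by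
    nlinarith [hD l hl, hx l hl]
  rw [afunInt, mul_sum]
  linarith [sum_le_sum h_coeff, sum_neg_distrib (f := fun l => D * x l) (s := Ioc j n)]

variable (C w m n)

-- The paper's `r_{σ,j}` for `1 ≤ j ≤ n`; the guard on `l` only makes the recursion on `n - j`
-- well founded, as `afunInt` reads `x l` for `j < l ≤ n` only.
def cartierDatum (σ : ℕ → Bool) (j : ℕ) : ℤ :=
  if σ j then 0 else
    afunInt C w m n j fun l => if _ : j < l ∧ l ≤ n then cartierDatum σ l else 0
termination_by n - j

lemma cartierDatum_eq (σ : ℕ → Bool) (j : ℕ) :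
    cartierDatum C w m n σ j = if σ j then 0 else afunInt C w m n j (cartierDatum C w m n σ) := by
  rw [cartierDatum]
  congr 1
  exact afunInt_congr fun l hl => by simp [mem_Ioc.mp hl]

end CartierData

section Bounds

variable {C : ℕ → ℕ → ℤ} {w : ℕ → ℕ} {m : ℕ → ℤ} {n : ℕ} {D : ℤ}

def cartierBound (D : ℤ) (m : ℕ → ℤ) (n l : ℕ) : ℤ :=
  (D + 1) ^ (n - l) * ∑ i ∈ Icc l n, m i

lemma cartierBound_nonneg (hD : 0 ≤ D) (hm : ∀ l, 0 ≤ m l) (l : ℕ) :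
    0 ≤ cartierBound D m n l :=
  mul_nonneg (by positivity) (sum_nonneg fun i _ => hm i)

lemma mul_sum_cartierBound_le (hD : 0 ≤ D) (hm : ∀ l, 0 ≤ m l) (j : ℕ) :
    D * ∑ l ∈ Ioc j n, cartierBound D m n l ≤ ((D + 1) ^ (n - j) - 1) * ∑ i ∈ Icc j n, m i := by
  have h_tail : ∀ l ∈ Ioc j n,
      cartierBound D m n l ≤ (D + 1) ^ (n - l) * ∑ i ∈ Icc j n, m i := fun l hl =>
    mul_le_mul_of_nonneg_left (sum_le_sum_of_subset_of_nonneg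
      (Icc_subset_Icc (mem_Ioc.mp hl).1.le le_rfl) fun i _ _ => hm i) (by positivity)
  calc D * ∑ l ∈ Ioc j n, cartierBound D m n l
      ≤ D * ∑ l ∈ Ioc j n, (D + 1) ^ (n - l) * ∑ i ∈ Icc j n, m i :=
        mul_le_mul_of_nonneg_left (sum_le_sum h_tail) hD
    _ = ((D + 1) ^ (n - j) - 1) * ∑ i ∈ Icc j n, m i := by
        rw [← one_add_mul_sum_Ioc_pow D j n, ← sum_mul]
        ring

lemma sum_cartierBound_le (hD : 0 ≤ D) (hm : ∀ l, 0 ≤ m l) (j : ℕ) :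
    ∑ l ∈ Ioc j n, cartierBound D m n l ≤ n * (D + 1) ^ n * ∑ i ∈ Ioc j n, m i := by
  have h_each : ∀ l ∈ Ioc j n, cartierBound D m n l ≤ (D + 1) ^ n * ∑ i ∈ Ioc j n, m i :=
    fun l hl => by
      obtain ⟨hjl, hln⟩ := mem_Ioc.mp hl
      refine mul_le_mul (pow_le_pow_right₀ (by omega) (by omega))
        (sum_le_sum_of_subset_of_nonneg ?_ fun i _ _ => hm i)
        (sum_nonneg fun i _ => hm i) (by positivity)
      intro i hi
      rw [mem_Icc] at hi
      rw [mem_Ioc]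
      omega
  calc ∑ l ∈ Ioc j n, cartierBound D m n l
      ≤ (Ioc j n).card • ((D + 1) ^ n * ∑ i ∈ Ioc j n, m i) := sum_le_card_nsmul _ _ _ h_each
    _ ≤ n * (D + 1) ^ n * ∑ i ∈ Ioc j n, m i := by
        rw [nsmul_eq_mul, Nat.card_Ioc, mul_assoc]
        exact mul_le_mul_of_nonneg_right (by exact_mod_cast Nat.sub_le n j)
          (mul_nonneg (by positivity) (sum_nonneg fun i _ => hm i))

theorem cartierDatum_bounds (hC2 : ∀ i, C i i = 2) (hCoff : ∀ i j, i ≠ j → C i j ≤ 0)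
    (hm : ∀ l, 0 ≤ m l) (hD0 : 0 ≤ D) (hD : ∀ l ≤ n, ∀ j ≤ n, -D ≤ C (w l) (w j))
    (hm_large : ∀ j ≤ n, 2 * ∑ l ∈ Ioc j n, cartierBound D m n l < m j)
    (σ : ℕ → Bool) (j : ℕ) (hj : j ≤ n) :
    0 ≤ cartierDatum C w m n σ j ∧ cartierDatum C w m n σ j ≤ cartierBound D m n j ∧
      (σ j = false → 0 < cartierDatum C w m n σ j) := by
  induction h : n - j using Nat.strong_induction_on generalizing j with
  | _ k ih =>
  set r := cartierDatum C w m n σ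
  have h_later : ∀ l ∈ Ioc j n, 0 ≤ r l ∧ r l ≤ cartierBound D m n l := fun l hl => by
    obtain ⟨hjl, hln⟩ := mem_Ioc.mp hl
    exact (ih (n - l) (by omega) l hln rfl).imp_right And.left
  have h_later_nonneg : ∀ l ∈ Ioc j n, 0 ≤ r l := fun l hl => (h_later l hl).1
  have h_sum_le : ∑ l ∈ Ioc j n, r l ≤ ∑ l ∈ Ioc j n, cartierBound D m n l :=
    sum_le_sum fun l hl => (h_later l hl).2
  rw [show r j = if σ j then 0 else afunInt C w m n j r from cartierDatum_eq C w m n σ j]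
  cases hσ : σ j with
  | true => simpa using cartierBound_nonneg hD0 hm j
  | false =>
    simp only [Bool.false_eq_true, if_false, forall_const]
    have h_lower := le_afunInt (w := w) hC2 hCoff hm hj h_later_nonneg
    have h_upper := afunInt_le hm (fun l hl => hD l (mem_Ioc.mp hl).2 j hj) h_later_nonneg
    have h_pos : 0 < afunInt C w m n j r := by linarith [hm_large j hj]
    refine ⟨h_pos.le, ?_, h_pos⟩
    calc afunInt C w m n j r
        ≤ ∑ i ∈ Icc j n, m i + D * ∑ l ∈ Ioc j n, cartierBound D m n l := by
          nlinarith
      _ ≤ ∑ i ∈ Icc j n, m i + ((D + 1) ^ (n - j) - 1) * ∑ i ∈ Icc j n, m i := by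
          linarith [mul_sum_cartierBound_le (n := n) hD0 hm j]
      _ = cartierBound D m n j := by
          rw [cartierBound]
          ring

end Bounds

lemma exists_nonneg_forall_neg_le (f : ℕ → ℕ → ℤ) (n : ℕ) :
    ∃ D, 0 ≤ D ∧ ∀ l ≤ n, ∀ j ≤ n, -D ≤ f l j := by
  refine ⟨∑ p ∈ range (n + 1) ×ˢ range (n + 1), |f p.1 p.2|,
    sum_nonneg fun _ _ => abs_nonneg _, fun l hl j hj => ?_⟩
  have h_mem : (l, j) ∈ range (n + 1) ×ˢ range (n + 1) := by simp; omega
  exact (neg_le_neg <| single_le_sum (f := fun p : ℕ × ℕ => |f p.1 p.2|)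
    (fun _ _ => abs_nonneg _) h_mem).trans (neg_abs_le _)

def geomMultiplicity (D L : ℤ) (n j : ℕ) : ℤ :=
  L * (2 * n * (D + 1) ^ n + 1) ^ (n - j)

lemma geomMultiplicity_eq (D L : ℤ) (n j : ℕ) :
    geomMultiplicity D L n j =
      L + 2 * n * (D + 1) ^ n * ∑ l ∈ Ioc j n, geomMultiplicity D L n l := by
  simp only [geomMultiplicity, ← mul_sum]
  rw [← one_add_mul_sum_Ioc_pow _ j n]
  ring

lemma le_geomMultiplicity {D L : ℤ} (hD : 0 ≤ D) (hL : 0 ≤ L) (n j : ℕ) :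
    L ≤ geomMultiplicity D L n j :=
  le_mul_of_one_le_right hL (one_le_pow₀ (le_add_of_nonneg_left (by positivity)))

lemma two_mul_sum_cartierBound_lt_geomMultiplicity {D L : ℤ} (hD : 0 ≤ D) (hL : 0 < L)
    (n j : ℕ) :
    2 * ∑ l ∈ Ioc j n, cartierBound D (geomMultiplicity D L n) n l < geomMultiplicity D L n j := by
  have hm : ∀ l, 0 ≤ geomMultiplicity D L n l := fun l =>
    hL.le.trans (le_geomMultiplicity hD hL.le n l)
  rw [geomMultiplicity_eq D L n j]
  linarith [sum_cartierBound_le (n := n) hD hm j]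

/-- Given a dominant weight, i.e. its multiplicity list
`mλ ∈ ℤ_{≥0}ⁿ`, and a word `w`, there exists a multiplicity list `m ∈ ℤ_{>0}ⁿ`
with `m_j ≥ mλ_j` for all `j`, such that the Cartier data `r_σ` (defined
recursively by `r_{σ,j} = 0` if `σ_j = +`, and
`r_{σ,j} = A_j(r_{σ,j+1},...,r_{σ,n})` if `σ_j = -`) satisfy `r_{σ,j} > 0`
whenever `σ_j = -`; in particular all `r_{σ,j} ≥ 0`. -/
theorem exists_multiplicity_list_with_positive_cartier_data
    (C : ℕ → ℕ → ℤ) (w : ℕ → ℕ)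
    (hC2 : ∀ i, C i i = 2) (hCoff : ∀ i j, i ≠ j → C i j ≤ 0)
    (mlam : ℕ → ℤ) (hmlam : ∀ l, 0 ≤ mlam l) (n : ℕ) :
    ∃ (m : ℕ → ℤ) (rr : (ℕ → Bool) → ℕ → ℤ),
      (∀ j ∈ Finset.Icc 1 n, mlam j ≤ m j ∧ 0 < m j) ∧
      (∀ σ, ∀ j ∈ Finset.Icc 1 n, σ j = true → rr σ j = 0) ∧
      (∀ σ, ∀ j ∈ Finset.Icc 1 n, σ j = false →
        (rr σ j : ℝ) = Afun C w m n j (fun l => (rr σ l : ℝ)) ∧ 0 < rr σ j) ∧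
      (∀ σ, ∀ j ∈ Finset.Icc 1 n, 0 ≤ rr σ j) := by
  obtain ⟨D, hD0, hD⟩ := exists_nonneg_forall_neg_le (fun l j => C (w l) (w j)) n
  set L := 1 + ∑ l ∈ Icc 1 n, mlam l
  have hL : 0 < L := by linarith [sum_nonneg fun l (_ : l ∈ Icc 1 n) => hmlam l]
  have hmlam_le : ∀ j ∈ Icc 1 n, mlam j ≤ L := fun j hj => by
    linarith [single_le_sum (fun l _ => hmlam l) hj]
  set m := geomMultiplicity D L n
  have hm_pos : ∀ j, 0 < m j := fun j => hL.trans_le (le_geomMultiplicity hD0 hL.le n j)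
  have h_bounds := cartierDatum_bounds hC2 hCoff (fun l => (hm_pos l).le) hD0 hD
    (fun j _ => two_mul_sum_cartierBound_lt_geomMultiplicity hD0 hL n j)
  refine ⟨m, cartierDatum C w m n, fun j hj => ⟨(hmlam_le j hj).trans
      (le_geomMultiplicity hD0 hL.le n j), hm_pos j⟩, fun σ j _ hσ => ?_,
    fun σ j hj hσ => ⟨?_, (h_bounds σ j (mem_Icc.mp hj).2).2.2 hσ⟩,
    fun σ j hj => (h_bounds σ j (mem_Icc.mp hj).2).1⟩
  · simp [cartierDatum_eq C w m n σ j, hσ]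
  · rw [← cast_afunInt, cartierDatum_eq C w m n σ j, hσ]
    simp
end

section
/- For G = SL_3 with word i = (1,2,1) and m = (0,1,1), the polytope P_{i,m} = {(x_1,x_2,x_3) in R^3 : 0 <= x_3 <= 1, 0 <= x_2 <= 1 + x_3, 0 <= x_1 <= x_2 - 2x_3 + 1} has the non-integral point (0, 0, 1/2) as a vertex; in particular P_{i,m} is not a lattice polytope. -/
/-- The polytope `P_{i,m}` for `G = SL₃`, `i = (1,2,1)`, `m = (0,1,1)`:
`{(x₁,x₂,x₃) : 0 ≤ x₃ ≤ 1, 0 ≤ x₂ ≤ 1 + x₃, 0 ≤ x₁ ≤ 1 + x₂ - 2x₃}`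
(coordinates `x 0 = x₁`, `x 1 = x₂`, `x 2 = x₃`). -/
def Psl3 : Set (Fin 3 → ℝ) :=
  {x | 0 ≤ x 2 ∧ x 2 ≤ 1 ∧ 0 ≤ x 1 ∧ x 1 ≤ 1 + x 2 ∧
       0 ≤ x 0 ∧ x 0 ≤ 1 + x 1 - 2 * x 2}

/-! Adding the three inequalities `x₁ ≥ 0`, `x₂ ≥ 0`, `x₁ ≤ 1 + x₂ - 2x₃` that are tight at
`(0, 0, 1/2)` gives `x₃ - x₂ ≤ 1/2` on `P_{i,m}`, with equality only at `(0, 0, 1/2)`.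
So this point is exposed by the functional `x₃ - x₂`, hence a vertex. -/

theorem Int.cast_ne_one_half {K : Type*} [Field K] [CharZero K] (n : ℤ) : (n : K) ≠ 1 / 2 := by
  intro h
  have h2 : ((2 * n : ℤ) : K) = 1 := by push_cast; rw [h]; ring
  have : 2 * n = 1 := by exact_mod_cast h2
  omega

theorem sub_le_one_half_of_mem_Psl3 {x : Fin 3 → ℝ} (hx : x ∈ Psl3) : x 2 - x 1 ≤ 1 / 2 := by
  obtain ⟨-, -, hx1, -, hx0, hx0'⟩ := hx
  linarith

theorem eq_of_mem_Psl3_of_one_half_le_sub {x : Fin 3 → ℝ} (hx : x ∈ Psl3)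
    (h : 1 / 2 ≤ x 2 - x 1) : x = ![0, 0, 1 / 2] := by
  obtain ⟨-, -, hx1, -, hx0, hx0'⟩ := hx
  have h1 : x 1 = 0 := by linarith
  have h0 : x 0 = 0 := by linarith
  have h2 : x 2 = 1 / 2 := by linarith
  ext i
  fin_cases i <;> simp [h0, h1, h2]

theorem mem_exposedPoints_Psl3 : ![0, 0, (1 : ℝ) / 2] ∈ Set.exposedPoints ℝ Psl3 := by
  let l : StrongDual ℝ (Fin 3 → ℝ) :=
    ContinuousLinearMap.proj (R := ℝ) (φ := fun _ => ℝ) 2 - ContinuousLinearMap.proj 1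
  refine ⟨by simp [Psl3]; norm_num, l, fun y hy => ⟨?_, fun hle => ?_⟩⟩
  · simpa [l] using sub_le_one_half_of_mem_Psl3 hy
  · exact eq_of_mem_Psl3_of_one_half_le_sub hy (by simpa [l] using hle)

/-- the non-integral point `(0, 0, 1/2)` is a vertex (extreme point)
of `P_{i,m}` for `i = (1,2,1)`, `m = (0,1,1)` in `SL₃`; in particular `P_{i,m}` is
not a lattice polytope. -/
theorem sl3_polytope_has_nonintegral_vertex :
    (![0, 0, (1:ℝ)/2] ∈ Set.extremePoints ℝ Psl3) ∧
    ¬ ∃ q : Fin 3 → ℤ, (fun i => (q i : ℝ)) = ![0, 0, (1:ℝ)/2] := by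
  refine ⟨exposedPoints_subset_extremePoints mem_exposedPoints_Psl3, ?_⟩
  rintro ⟨q, hq⟩
  exact Int.cast_ne_one_half (K := ℝ) (q 2) (by simpa using congrFun hq 2)
end
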